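/- For all probability measures μ, ν, ρ on a measurable space X, JSD(μ, ν) ≤ (1/2)·klDiv(μ‖ρ) + (1/2)·klDiv(ν‖ρ) in the extended reals; i.e., the Jensen–Shannon divergence is dominated by the average KL divergence to any common reference probability measure. -/
import Mathlib


open MeasureTheory Real
open scoped ENNReal NNReal

open scoped Classical in
/-- Kullback-Leibler divergence of measures (Mathlib's definition). -/
noncomputable def klDiv {X : Type*} [MeasurableSpace X] (μ ν : Measure X) : ℝ≥0∞ :=
  if μ ≪ ν ∧ Integrable (llr μ ν) μ then ENNReal.ofReal (∫ x, llr μ ν x ∂μ) else ⊤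

/-- Jensen-Shannon divergence of measures. -/
noncomputable def JSD {X : Type*} [MeasurableSpace X] (μ ν : Measure X) : ℝ≥0∞ :=
  (1 / 2) * klDiv μ ((1 / 2 : ℝ≥0∞) • μ + (1 / 2 : ℝ≥0∞) • ν) +
    (1 / 2) * klDiv ν ((1 / 2 : ℝ≥0∞) • μ + (1 / 2 : ℝ≥0∞) • ν)

section Aux

variable {X : Type*} [MeasurableSpace X]

/-- Gibbs' inequality: the KL integral between probability measures is nonnegative. -/
lemma gibbs_aux (α β : Measure X) [IsProbabilityMeasure α] [IsProbabilityMeasure β]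
    (hab : α ≪ β) (hint : Integrable (llr α β) α) : 0 ≤ ∫ x, llr α β x ∂α := by
  have hneg : Integrable (llr β α) α := hint.neg.congr (neg_llr hab)
  have hβα_int : Integrable (fun x ↦ (β.rnDeriv α x).toReal) α :=
    Measure.integrable_toReal_rnDeriv
  have hle : (llr β α) ≤ᵐ[α] fun x ↦ (β.rnDeriv α x).toReal - 1 := by
    filter_upwards [Measure.rnDeriv_pos' hab, Measure.rnDeriv_lt_top β α] with x h0 htop
    exact Real.log_le_sub_one_of_pos (ENNReal.toReal_pos h0.ne' htop.ne)
  have h1 : ∫ x, llr β α x ∂α ≤ ∫ x, ((β.rnDeriv α x).toReal - 1) ∂α :=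
    integral_mono_ae hneg (hβα_int.sub (integrable_const 1)) hle
  have h2 : ∫ x, ((β.rnDeriv α x).toReal - 1) ∂α
      = ∫ x, (β.rnDeriv α x).toReal ∂α - 1 := by
    rw [integral_sub hβα_int (integrable_const 1), integral_const]; simp
  have h3 : ∫ x, (β.rnDeriv α x).toReal ∂α ≤ 1 := by
    have := Measure.setIntegral_toReal_rnDeriv_le (μ := β) (ν := α) (s := Set.univ)
      (measure_ne_top β _)
    simpa using this
  have h5 : ∫ x, llr α β x ∂α = - ∫ x, llr β α x ∂α := by
    rw [← integral_congr_ae (neg_llr hab)]; simp [integral_neg]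
  rw [h2] at h1
  rw [h5]
  linarith

/-- Chain rule for log-likelihood ratios. -/
lemma llr_chain_aux (μ m ρ : Measure X) [SigmaFinite μ] [SigmaFinite m] [SigmaFinite ρ]
    (hμm : μ ≪ m) (hmρ : m ≪ ρ) : llr μ ρ =ᵐ[μ] llr μ m + llr m ρ := by
  have hμρ := hμm.trans hmρ
  filter_upwards [hμρ.ae_le (Measure.rnDeriv_mul_rnDeriv hμm), Measure.rnDeriv_pos hμm,
    hμm.ae_le (Measure.rnDeriv_lt_top μ m), hμm.ae_le (Measure.rnDeriv_pos hmρ),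
    hμρ.ae_le (Measure.rnDeriv_lt_top m ρ)] with x hmul h1 h2 h3 h4
  rw [Pi.add_apply, llr, llr, llr, ← hmul, Pi.mul_apply, ENNReal.toReal_mul,
    Real.log_mul (ENNReal.toReal_pos h1.ne' h2.ne).ne' (ENNReal.toReal_pos h3.ne' h4.ne).ne']

/-- Integrability of `llr μ m` when the density of `μ` w.r.t. `m` is bounded by `2`. -/
lemma integrable_llr_aux (μ m : Measure X) [IsFiniteMeasure μ] [IsFiniteMeasure m]
    (hμm : μ ≪ m) (hbound : ∀ᵐ x ∂μ, μ.rnDeriv m x ≤ 2) : Integrable (llr μ m) μ := by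
  have hb : ∀ᵐ x ∂μ, ‖llr μ m x‖ ≤ log 2 + (m.rnDeriv μ x).toReal := by
    filter_upwards [hbound, exp_neg_llr hμm] with x hx2 hxexp
    have hub : llr μ m x ≤ log 2 := by
      rw [llr]
      have ht : (μ.rnDeriv m x).toReal ≤ 2 := by
        have := ENNReal.toReal_mono (by norm_num : (2 : ℝ≥0∞) ≠ ∞) hx2
        simpa using this
      rcases eq_or_lt_of_le (ENNReal.toReal_nonneg (a := μ.rnDeriv m x)) with h | h
      · rw [← h, Real.log_zero]
        exact Real.log_nonneg one_le_two
      · exact Real.log_le_log h ht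
    have hlb : -llr μ m x ≤ (m.rnDeriv μ x).toReal := by
      calc -llr μ m x ≤ exp (-llr μ m x) := by
            linarith [Real.add_one_le_exp (-llr μ m x)]
        _ = (m.rnDeriv μ x).toReal := hxexp
    rw [Real.norm_eq_abs, abs_le]
    constructor
    · have := Real.log_nonneg (one_le_two (α := ℝ))
      linarith
    · have := ENNReal.toReal_nonneg (a := m.rnDeriv μ x)
      linarith
  refine Integrable.mono ((integrable_const (log 2)).add
    (Measure.integrable_toReal_rnDeriv (μ := m) (ν := μ)))
    (stronglyMeasurable_llr μ m).aestronglyMeasurable ?_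
  filter_upwards [hb] with x hx
  refine hx.trans (le_abs_self _)

end Aux

/-- The Jensen-Shannon divergence is dominated by the average KL divergence to any
common reference probability measure. -/
theorem jsd_le_avg_klDiv
    {X : Type*} [MeasurableSpace X] (μ ν ρ : Measure X)
    [IsProbabilityMeasure μ] [IsProbabilityMeasure ν] [IsProbabilityMeasure ρ] :
    JSD μ ν ≤ (1 / 2) * klDiv μ ρ + (1 / 2) * klDiv ν ρ := by
  by_cases h1 : μ ≪ ρ ∧ Integrable (llr μ ρ) μ
  swap
  · unfold klDiv
    rw [if_neg h1, ENNReal.mul_top (by norm_num), top_add]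
    exact le_top
  by_cases h2 : ν ≪ ρ ∧ Integrable (llr ν ρ) ν
  swap
  · unfold klDiv
    rw [if_neg h2, ENNReal.mul_top (by norm_num), add_top]
    exact le_top
  obtain ⟨hμρ, hintμρ⟩ := h1
  obtain ⟨hνρ, hintνρ⟩ := h2
  set m : Measure X := (1 / 2 : ℝ≥0∞) • μ + (1 / 2 : ℝ≥0∞) • ν with hm
  have him : IsProbabilityMeasure m := by
    constructor
    rw [hm]
    simp only [Measure.coe_add, Pi.add_apply, Measure.smul_apply, smul_eq_mul,
      measure_univ, mul_one]
    exact ENNReal.add_halves 1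
  have hleμ : (1/2 : ℝ≥0∞) • μ ≤ m := by rw [hm]; exact Measure.le_add_right le_rfl
  have hleν : (1/2 : ℝ≥0∞) • ν ≤ m := by rw [hm]; exact Measure.le_add_left le_rfl
  have hμm : μ ≪ m :=
    (Measure.absolutelyContinuous_smul (by norm_num : (1/2 : ℝ≥0∞) ≠ 0)).trans
      (Measure.absolutelyContinuous_of_le hleμ)
  have hνm : ν ≪ m :=
    (Measure.absolutelyContinuous_smul (by norm_num : (1/2 : ℝ≥0∞) ≠ 0)).trans
      (Measure.absolutelyContinuous_of_le hleν)
  have hmρ : m ≪ ρ := (hμρ.smul_left _).add_left (hνρ.smul_left _)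
  -- densities w.r.t. `m` are bounded by 2
  have hbound : ∀ α : Measure X, IsFiniteMeasure α → (1/2 : ℝ≥0∞) • α ≤ m →
      ∀ᵐ x ∂m, α.rnDeriv m x ≤ 2 := by
    intro α _ hle
    filter_upwards [Measure.rnDeriv_le_one_of_le hle,
      Measure.rnDeriv_smul_left_of_ne_top α m (by norm_num : (1/2 : ℝ≥0∞) ≠ ∞)] with x hx1 hx2
    rw [hx2] at hx1
    simp only [Pi.smul_apply, smul_eq_mul, Pi.one_apply, one_div] at hx1
    calc α.rnDeriv m x = 2 * (2⁻¹ * α.rnDeriv m x) := by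
          rw [← mul_assoc, ENNReal.mul_inv_cancel (by norm_num) (by norm_num), one_mul]
      _ ≤ 2 * 1 := by gcongr
      _ = 2 := mul_one 2
  have hboundμ : ∀ᵐ x ∂μ, μ.rnDeriv m x ≤ 2 :=
    hμm.ae_le (hbound μ inferInstance hleμ)
  have hboundν : ∀ᵐ x ∂ν, ν.rnDeriv m x ≤ 2 :=
    hνm.ae_le (hbound ν inferInstance hleν)
  have intμm : Integrable (llr μ m) μ := integrable_llr_aux μ m hμm hboundμ
  have intνm : Integrable (llr ν m) ν := integrable_llr_aux ν m hνm hboundν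
  -- chain rule
  have hchainμ : llr μ ρ =ᵐ[μ] llr μ m + llr m ρ := llr_chain_aux μ m ρ hμm hmρ
  have hchainν : llr ν ρ =ᵐ[ν] llr ν m + llr m ρ := llr_chain_aux ν m ρ hνm hmρ
  have intmρμ : Integrable (llr m ρ) μ := by
    refine (hintμρ.sub intμm).congr ?_
    filter_upwards [hchainμ] with x hx
    simp only [Pi.sub_apply, Pi.add_apply] at hx ⊢
    linarith [hx]
  have intmρν : Integrable (llr m ρ) ν := by
    refine (hintνρ.sub intνm).congr ?_
    filter_upwards [hchainν] with x hx
    simp only [Pi.sub_apply, Pi.add_apply] at hx ⊢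
    linarith [hx]
  have intmρm : Integrable (llr m ρ) m := by
    rw [hm]
    exact integrable_add_measure.mpr
      ⟨intmρμ.smul_measure (by norm_num), intmρν.smul_measure (by norm_num)⟩
  -- integral identities
  have Iμρ_eq : ∫ x, llr μ ρ x ∂μ = ∫ x, llr μ m x ∂μ + ∫ x, llr m ρ x ∂μ := by
    rw [integral_congr_ae hchainμ]
    simp only [Pi.add_apply]
    exact integral_add intμm intmρμ
  have Iνρ_eq : ∫ x, llr ν ρ x ∂ν = ∫ x, llr ν m x ∂ν + ∫ x, llr m ρ x ∂ν := by
    rw [integral_congr_ae hchainν]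
    simp only [Pi.add_apply]
    exact integral_add intνm intmρν
  have K_eq : ∫ x, llr m ρ x ∂m
      = (1/2) * ∫ x, llr m ρ x ∂μ + (1/2) * ∫ x, llr m ρ x ∂ν := by
    set g := llr m ρ with hg
    rw [hm, integral_add_measure (intmρμ.smul_measure (by norm_num))
      (intmρν.smul_measure (by norm_num)), integral_smul_measure, integral_smul_measure,
      ENNReal.toReal_div]
    norm_num
  -- nonnegativity
  have gμm : 0 ≤ ∫ x, llr μ m x ∂μ := gibbs_aux μ m hμm intμm
  have gνm : 0 ≤ ∫ x, llr ν m x ∂ν := gibbs_aux ν m hνm intνm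
  have gmρ : 0 ≤ ∫ x, llr m ρ x ∂m := gibbs_aux m ρ hmρ intmρm
  have gμρ : 0 ≤ ∫ x, llr μ ρ x ∂μ := gibbs_aux μ ρ hμρ hintμρ
  have gνρ : 0 ≤ ∫ x, llr ν ρ x ∂ν := gibbs_aux ν ρ hνρ hintνρ
  -- put everything together
  rw [JSD, ← hm, klDiv, if_pos ⟨hμm, intμm⟩, klDiv, if_pos ⟨hνm, intνm⟩,
    klDiv, if_pos ⟨hμρ, hintμρ⟩, klDiv, if_pos ⟨hνρ, hintνρ⟩]
  have h12 : (1/2 : ℝ≥0∞) = ENNReal.ofReal (1/2) := by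
    rw [ENNReal.ofReal_div_of_pos (by norm_num)]
    norm_num
  rw [h12, ← ENNReal.ofReal_mul (by norm_num), ← ENNReal.ofReal_mul (by norm_num),
    ← ENNReal.ofReal_mul (by norm_num), ← ENNReal.ofReal_mul (by norm_num),
    ← ENNReal.ofReal_add (by linarith) (by linarith),
    ← ENNReal.ofReal_add (by linarith) (by linarith)]
  apply ENNReal.ofReal_le_ofReal
  rw [Iμρ_eq, Iνρ_eq]
  rw [K_eq] at gmρ
  linarith
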